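/- If S is a two-distance set of n points on the unit sphere S^{d-1} in R^d, then n ≤ (d+1)(d+2)/2 (in fact stronger bounds hold, but prove this harmonic-polynomial bound). -/

import Mathlib

open Polynomial Matrix

noncomputable section

/-- The Borsuk number of a bounded set `S`: the least `k` such that `S` can be covered
by `k` subsets each of diameter strictly smaller than the diameter of `S`. -/
def borsukNumber {d : ℕ} (S : Set (EuclideanSpace ℝ (Fin d))) : ℕ :=
  sInf {k | ∃ c : Fin k → Set (EuclideanSpace ℝ (Fin d)),
    (∀ i, c i ⊆ S ∧ Metric.diam (c i) < Metric.diam S) ∧ S ⊆ ⋃ i, c i}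

/-- The clique covering number `θ(G)`: the least number of cliques covering all vertices. -/
def cliqueCoverNumber {V : Type*} (G : SimpleGraph V) : ℕ :=
  sInf {k | ∃ c : Fin k → Set V, (∀ i, G.IsClique (c i)) ∧ (⋃ i, c i) = Set.univ}

/-- The bordered matrix `A_G(t)`: first row and column `(0,1,…,1)`, zero diagonal,
entry `1` at edges of `G` and `t` at non-edges. The `none` index is the border. -/
def graphMat {n : ℕ} (G : SimpleGraph (Fin n)) [DecidableRel G.Adj]
    {R : Type*} [CommRing R] (t : R) : Matrix (Option (Fin n)) (Option (Fin n)) R :=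
  fun i j => match i, j with
  | none, none => 0
  | none, some _ => 1
  | some _, none => 1
  | some i, some j => if i = j then 0 else if G.Adj i j then 1 else t

/-- `C_G(t) = det A_G(t)` as a polynomial in `t`. -/
def graphPoly {n : ℕ} (G : SimpleGraph (Fin n)) [DecidableRel G.Adj] : Polynomial ℝ :=
  (graphMat G (Polynomial.X : Polynomial ℝ)).det

/-- `τ₁(G)`: the smallest root `t > 1` of `C_G`. -/
def tau1 {n : ℕ} (G : SimpleGraph (Fin n)) [DecidableRel G.Adj] : ℝ :=
  sInf {t : ℝ | 1 < t ∧ (graphPoly G).IsRoot t}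

open scoped Classical in
/-- `μ(G)`: the multiplicity of the smallest root `t > 1` of `C_G`, or `0` if none exists. -/
def mu {n : ℕ} (G : SimpleGraph (Fin n)) [DecidableRel G.Adj] : ℕ :=
  if (∃ t : ℝ, 1 < t ∧ (graphPoly G).IsRoot t) then
    (graphPoly G).rootMultiplicity (tau1 G) else 0

/-- `f` realizes `G` in Euclidean space as a two-distance set: distance `1` on edges
and distance `b` on non-edges. -/
def IsRealization {n d : ℕ} (G : SimpleGraph (Fin n)) (b : ℝ)
    (f : Fin n → EuclideanSpace ℝ (Fin d)) : Prop :=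
  (∀ i j, G.Adj i j → dist (f i) (f j) = 1) ∧
  (∀ i j, i ≠ j → ¬ G.Adj i j → dist (f i) (f j) = b)

/-- The Cayley–Menger matrix of a tuple of points (the `none` index is the border). -/
def cmMat {n d : ℕ} (p : Fin n → EuclideanSpace ℝ (Fin d)) :
    Matrix (Option (Fin n)) (Option (Fin n)) ℝ :=
  fun i j => match i, j with
  | none, none => 0
  | none, some _ => 1
  | some _, none => 1
  | some i, some j => dist (p i) (p j) ^ 2

/-- `G` is a disjoint union of cliques (adjacency is transitive). -/
def IsUnionOfCliques {V : Type*} (G : SimpleGraph V) : Prop :=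
  ∀ u v w, G.Adj u v → G.Adj v w → u ≠ w → G.Adj u w

/-- `G` is complete multipartite (non-adjacency is transitive). -/
def IsCompleteMultipartite {V : Type*} (G : SimpleGraph V) : Prop :=
  ∀ u v w, ¬ G.Adj u v → ¬ G.Adj v w → ¬ G.Adj u w

/-- The clique number `ω(G)`. -/
def cliqueNumber {V : Type*} (G : SimpleGraph V) : ℕ :=
  sSup {k | ∃ s : Finset V, G.IsNClique k s}

/-!
For `p ∈ S` the function `f_p x = (‖x - p‖² - a²)(‖x - p‖² - b²)`, where `a, b` are the two
distances, vanishes at every point of `S` other than `p` and not at `p`, so the `f_p` are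
linearly independent. On the unit sphere `‖x - p‖² = 2 - 2⟪p, x⟫`, so each `f_p` is a product of
two affine functions, hence lies in the span of the `(d + 1)(d + 2) / 2` products of two elements
of `{1, x₁, …, x_d}`.
-/

theorem linearIndependent_of_apply_eq_zero_of_ne {ι X K : Type*} [Field K] (v : ι → X → K)
    (q : ι → X) (h0 : Pairwise fun i j => v j (q i) = 0) (h1 : ∀ i, v i (q i) ≠ 0) :
    LinearIndependent K v :=
  .of_pairwise_dual_eq_zero_one v (fun i => (v i (q i))⁻¹ • LinearMap.proj (q i))
    (fun i j hij => by simp [h0 hij]) (fun i => by simp [h1 i])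

theorem dist_sq_eq_two_sub_two_inner {E : Type*} [NormedAddCommGroup E] [InnerProductSpace ℝ E]
    {p q : E} (hp : ‖p‖ = 1) (hq : ‖q‖ = 1) : dist p q ^ 2 = 2 - 2 * inner ℝ p q := by
  rw [dist_eq_norm, norm_sub_sq_real, hp, hq]; ring

theorem Set.exists_ne_subset_pair_of_ncard_le_two {α : Type*} [Nontrivial α] {T : Set α} {c : α}
    (hT : T.Finite) (h2 : T.ncard ≤ 2) (hc : c ∉ T) : ∃ a b, a ≠ c ∧ b ≠ c ∧ T ⊆ {a, b} := by
  interval_cases hn : T.ncard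
  · obtain ⟨a, ha⟩ := exists_ne c
    exact ⟨a, a, ha, ha, by simp [(Set.ncard_eq_zero hT).1 hn]⟩
  · obtain ⟨a, rfl⟩ := Set.ncard_eq_one.1 hn
    exact ⟨a, a, fun h => hc (h ▸ rfl), fun h => hc (h ▸ rfl), by simp⟩
  · obtain ⟨a, b, -, rfl⟩ := Set.ncard_eq_two.1 hn
    exact ⟨a, b, fun h => hc (by simp [h]), fun h => hc (by simp [h]), subset_rfl⟩

section QuadraticFunctions

open Module Submodule Set

variable (ι : Type*)

def affineCoord : Option ι → EuclideanSpace ℝ ι → ℝ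
  | none => fun _ => 1
  | some i => fun x => x i

def quadraticMonomial : Sym2 (Option ι) → EuclideanSpace ℝ ι → ℝ :=
  Sym2.lift ⟨fun i j => affineCoord ι i * affineCoord ι j, fun _ _ => mul_comm _ _⟩

def affineFunctions : Submodule ℝ (EuclideanSpace ℝ ι → ℝ) :=
  span ℝ (range (affineCoord ι))

def quadraticFunctions : Submodule ℝ (EuclideanSpace ℝ ι → ℝ) :=
  span ℝ (range (quadraticMonomial ι))

instance [Fintype ι] : FiniteDimensional ℝ (quadraticFunctions ι) :=
  FiniteDimensional.span_of_finite ℝ (finite_range _)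

theorem finrank_quadraticFunctions_le [Fintype ι] :
    finrank ℝ (quadraticFunctions ι) ≤ (Fintype.card ι + 1) * (Fintype.card ι + 2) / 2 := by
  refine (finrank_range_le_card _).trans_eq ?_
  rw [Sym2.card, Fintype.card_option, Nat.choose_two_right, Nat.add_sub_cancel, mul_comm]

variable {ι}

theorem const_add_inner_mem_affineFunctions [Fintype ι] (c : ℝ) (u : EuclideanSpace ℝ ι) :
    (fun x => c + inner ℝ u x) ∈ affineFunctions ι := by
  have : (fun x => c + inner ℝ u x) =
      c • affineCoord ι none + ∑ i, u i • affineCoord ι (some i) := by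
    ext x
    simp [affineCoord, PiLp.inner_apply, mul_comm]
  rw [this]
  exact add_mem (smul_mem _ _ (subset_span ⟨_, rfl⟩))
    (sum_mem fun i _ => smul_mem _ _ (subset_span ⟨_, rfl⟩))

theorem mul_mem_quadraticFunctions {f g : EuclideanSpace ℝ ι → ℝ} (hf : f ∈ affineFunctions ι)
    (hg : g ∈ affineFunctions ι) : f * g ∈ quadraticFunctions ι := by
  have := Submodule.mul_mem_mul hf hg
  rw [affineFunctions, span_mul_span] at this
  refine span_mono ?_ this
  rintro _ ⟨_, ⟨i, rfl⟩, _, ⟨j, rfl⟩, rfl⟩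
  exact ⟨s(i, j), rfl⟩

end QuadraticFunctions

section Annihilator

variable {E : Type*} [NormedAddCommGroup E] [InnerProductSpace ℝ E]

def twoDistanceAnnihilator (a b : ℝ) (p : E) : E → ℝ :=
  fun x => (2 - a ^ 2 - 2 * inner ℝ p x) * (2 - b ^ 2 - 2 * inner ℝ p x)

variable {a b : ℝ} {p q : E}

theorem twoDistanceAnnihilator_apply_of_norm_eq_one (hp : ‖p‖ = 1) (hq : ‖q‖ = 1) :
    twoDistanceAnnihilator a b p q = (dist p q ^ 2 - a ^ 2) * (dist p q ^ 2 - b ^ 2) := by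
  rw [dist_sq_eq_two_sub_two_inner hp hq, twoDistanceAnnihilator]; ring

theorem twoDistanceAnnihilator_apply_self (hp : ‖p‖ = 1) :
    twoDistanceAnnihilator a b p p = a ^ 2 * b ^ 2 := by
  rw [twoDistanceAnnihilator_apply_of_norm_eq_one hp hp, dist_self]; ring

end Annihilator

theorem twoDistanceAnnihilator_mem_quadraticFunctions {ι : Type*} [Fintype ι] (a b : ℝ)
    (p : EuclideanSpace ℝ ι) : twoDistanceAnnihilator a b p ∈ quadraticFunctions ι := by
  have affine (c : ℝ) : (fun x => c - 2 * inner ℝ p x) ∈ affineFunctions ι := by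
    convert const_add_inner_mem_affineFunctions c (-(2 : ℝ) • p) using 2
    rw [real_inner_smul_left]; ring
  exact mul_mem_quadraticFunctions (affine _) (affine _)

open Module Submodule in
theorem card_le_of_forall_dist_eq_or_eq {ι : Type*} [Fintype ι] (S : Finset (EuclideanSpace ℝ ι))
    (hS : ∀ p ∈ S, ‖p‖ = 1) {a b : ℝ} (ha : a ≠ 0) (hb : b ≠ 0)
    (hab : ∀ p ∈ S, ∀ q ∈ S, p ≠ q → dist p q = a ∨ dist p q = b) :
    S.card ≤ (Fintype.card ι + 1) * (Fintype.card ι + 2) / 2 := by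
  have hv : LinearIndependent ℝ fun p : S =>
      twoDistanceAnnihilator a b (p : EuclideanSpace ℝ ι) := by
    refine linearIndependent_of_apply_eq_zero_of_ne _ Subtype.val (fun p q hpq => ?_) fun p => ?_
    · change twoDistanceAnnihilator a b (q : EuclideanSpace ℝ ι) p = 0
      rw [twoDistanceAnnihilator_apply_of_norm_eq_one (hS _ q.2) (hS _ p.2)]
      rcases hab _ q.2 _ p.2 (Subtype.coe_ne_coe.2 hpq.symm) with h | h <;> simp [h]
    · change twoDistanceAnnihilator a b (p : EuclideanSpace ℝ ι) p ≠ 0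
      rw [twoDistanceAnnihilator_apply_self (hS _ p.2)]
      positivity
  calc S.card = Fintype.card S := (Fintype.card_coe S).symm
    _ = finrank ℝ (span ℝ (Set.range _)) := (finrank_span_eq_card hv).symm
    _ ≤ finrank ℝ (quadraticFunctions ι) := finrank_mono <| span_le.2 <| Set.range_subset_iff.2
        fun p => twoDistanceAnnihilator_mem_quadraticFunctions a b (p : EuclideanSpace ℝ ι)
    _ ≤ _ := finrank_quadraticFunctions_le ι

theorem stmt2 {d : ℕ} (S : Finset (EuclideanSpace ℝ (Fin d)))
    (hsph : ∀ p ∈ S, ‖p‖ = 1)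
    (h : ({r : ℝ | ∃ p ∈ S, ∃ q ∈ S, p ≠ q ∧ dist p q = r}).ncard ≤ 2) :
    S.card ≤ (d + 1) * (d + 2) / 2 := by
  have hfin : {r : ℝ | ∃ p ∈ S, ∃ q ∈ S, p ≠ q ∧ dist p q = r}.Finite :=
    (S.finite_toSet.image2 dist S.finite_toSet).subset <| by
      rintro _ ⟨p, hp, q, hq, -, rfl⟩
      exact ⟨p, hp, q, hq, rfl⟩
  obtain ⟨a, b, ha, hb, hab⟩ := Set.exists_ne_subset_pair_of_ncard_le_two hfin h <| by
    rintro ⟨p, -, q, -, hpq, hpq₀⟩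
    exact hpq (dist_eq_zero.1 hpq₀)
  simpa using card_le_of_forall_dist_eq_or_eq S hsph ha hb
    fun p hp q hq hpq => hab ⟨p, hp, q, hq, hpq, rfl⟩
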